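/- A Cu-semigroup S satisfies (O6) if and only if every basis B ⊆ S has the following property: for all x', x, y', y, z', z ∈ B satisfying x ≪ y' + z', x' ≪ x, y' ≪ y, z' ≪ z, there exist v, w ∈ B such that x' ≪ v + w, v ≪ x, v ≪ y, w ≪ x, and w ≪ z. -/
import Mathlib


def WayBelow {S : Type*} [PartialOrder S] (x y : S) : Prop :=
  ∀ f : ℕ → S, Monotone f → ∀ z : S, IsLUB (Set.range f) z → y ≤ z → ∃ n, x ≤ f n

class CuSemigroup (S : Type*) [AddCommMonoid S] [PartialOrder S] : Prop where
  zero_le : ∀ x : S, 0 ≤ x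
  add_le_add_left : ∀ x y : S, x ≤ y → ∀ z : S, z + x ≤ z + y
  exists_sup : ∀ f : ℕ → S, Monotone f → ∃ z : S, IsLUB (Set.range f) z
  exists_wb_seq : ∀ x : S, ∃ f : ℕ → S, (∀ n, WayBelow (f n) (f (n + 1))) ∧ IsLUB (Set.range f) x
  wb_add : ∀ x' x y' y : S, WayBelow x' x → WayBelow y' y → WayBelow (x' + y') (x + y)
  sup_add : ∀ f g : ℕ → S, Monotone f → Monotone g → ∀ a b : S,
    IsLUB (Set.range f) a → IsLUB (Set.range g) b →
    IsLUB (Set.range fun n => f n + g n) (a + b)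

def IsBasis {S : Type*} [PartialOrder S] (B : Set S) : Prop :=
  ∀ x' x : S, WayBelow x' x → ∃ b ∈ B, WayBelow x' b ∧ WayBelow b x

def O6 (S : Type*) [AddCommMonoid S] [PartialOrder S] : Prop :=
  ∀ x' x y z : S, WayBelow x' x → x ≤ y + z →
    ∃ v w : S, v ≤ x ∧ v ≤ y ∧ w ≤ x ∧ w ≤ z ∧ x' ≤ v + w

section Aux

variable {S : Type*} [PartialOrder S]

theorem wb_le {x y : S} (h : WayBelow x y) : x ≤ y := by
  obtain ⟨n, hn⟩ := h (fun _ => y) monotone_const y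
    (by rw [Set.range_const]; exact isLUB_singleton) le_rfl
  exact hn

theorem le_wb {a b c : S} (hab : a ≤ b) (hbc : WayBelow b c) : WayBelow a c := by
  intro f hf z hz hcz
  obtain ⟨n, hn⟩ := hbc f hf z hz hcz
  exact ⟨n, hab.trans hn⟩

theorem wb_le_trans {a b c : S} (hab : WayBelow a b) (hbc : b ≤ c) : WayBelow a c := by
  intro f hf z hz hcz
  exact hab f hf z hz (hbc.trans hcz)

variable [AddCommMonoid S] [CuSemigroup S]

theorem wb_seq_mono (f : ℕ → S) (h : ∀ n, WayBelow (f n) (f (n + 1))) : Monotone f :=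
  monotone_nat_of_le_succ fun n => wb_le (h n)

theorem wb_interp {x' x : S} (h : WayBelow x' x) : ∃ u, WayBelow x' u ∧ WayBelow u x := by
  obtain ⟨f, hf, hlub⟩ := CuSemigroup.exists_wb_seq x
  obtain ⟨n, hn⟩ := h f (wb_seq_mono f hf) x hlub le_rfl
  refine ⟨f (n + 1), le_wb hn (hf n), wb_le_trans (hf (n + 1)) ?_⟩
  exact hlub.1 (Set.mem_range_self _)

theorem add_le_add' {a b c d : S} (h1 : a ≤ b) (h2 : c ≤ d) : a + c ≤ b + d := by
  calc a + c ≤ a + d := CuSemigroup.add_le_add_left c d h2 a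
    _ = d + a := add_comm a d
    _ ≤ d + b := CuSemigroup.add_le_add_left a b h1 d
    _ = b + d := add_comm d b

theorem univ_basis : IsBasis (Set.univ : Set S) := by
  intro x' x h
  obtain ⟨u, h1, h2⟩ := wb_interp h
  exact ⟨u, Set.mem_univ u, h1, h2⟩

end Aux

theorem o6_iff_basis_property {S : Type*} [AddCommMonoid S] [PartialOrder S] [CuSemigroup S] :
    O6 S ↔ ∀ B : Set S, IsBasis B →
      ∀ x' x y' y z' z : S, x' ∈ B → x ∈ B → y' ∈ B → y ∈ B → z' ∈ B → z ∈ B →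
        WayBelow x (y' + z') → WayBelow x' x → WayBelow y' y → WayBelow z' z →
        ∃ v ∈ B, ∃ w ∈ B, WayBelow x' (v + w) ∧
          WayBelow v x ∧ WayBelow v y ∧ WayBelow w x ∧ WayBelow w z := by
  constructor
  · intro hO6 B hB x' x y' y z' z _ _ _ _ _ _ hxyz hx'x hy'y hz'z
    obtain ⟨x₁, hx'x₁, hx₁x⟩ := wb_interp hx'x
    obtain ⟨x₂, hx₁x₂, hx₂x⟩ := wb_interp hx₁x
    have hx₂ : x₂ ≤ y' + z' := (wb_le hx₂x).trans (wb_le hxyz)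
    obtain ⟨v₀, w₀, hv₀x₂, hv₀y', hw₀x₂, hw₀z', hx₁vw⟩ := hO6 x₁ x₂ y' z' hx₁x₂ hx₂
    obtain ⟨f, hf, hflub⟩ := CuSemigroup.exists_wb_seq v₀
    obtain ⟨g, hg, hglub⟩ := CuSemigroup.exists_wb_seq w₀
    have hfm := wb_seq_mono f hf
    have hgm := wb_seq_mono g hg
    have hsum := CuSemigroup.sup_add f g hfm hgm v₀ w₀ hflub hglub
    have hx'vw : WayBelow x' (v₀ + w₀) := wb_le_trans hx'x₁ hx₁vw
    obtain ⟨n, hn⟩ := hx'vw (fun n => f n + g n)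
      (fun a b hab => add_le_add' (hfm hab) (hgm hab)) (v₀ + w₀) hsum le_rfl
    have hfv₀ : WayBelow (f n) v₀ := wb_le_trans (hf n) (hflub.1 (Set.mem_range_self _))
    have hgw₀ : WayBelow (g n) w₀ := wb_le_trans (hg n) (hglub.1 (Set.mem_range_self _))
    obtain ⟨v, hvB, hfv, hvv₀⟩ := hB (f n) v₀ hfv₀
    obtain ⟨w, hwB, hgw, hww₀⟩ := hB (g n) w₀ hgw₀
    refine ⟨v, hvB, w, hwB, ?_, ?_, ?_, ?_, ?_⟩
    · exact le_wb hn (CuSemigroup.wb_add _ _ _ _ hfv hgw)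
    · exact le_wb ((wb_le hvv₀).trans hv₀x₂) hx₂x
    · exact le_wb ((wb_le hvv₀).trans hv₀y') hy'y
    · exact le_wb ((wb_le hww₀).trans hw₀x₂) hx₂x
    · exact le_wb ((wb_le hww₀).trans hw₀z') hz'z
  · intro hprop x' x y z hx'x hxyz
    obtain ⟨x₂, hx'x₂, hx₂x⟩ := wb_interp hx'x
    obtain ⟨f, hf, hflub⟩ := CuSemigroup.exists_wb_seq y
    obtain ⟨g, hg, hglub⟩ := CuSemigroup.exists_wb_seq z
    have hfm := wb_seq_mono f hf
    have hgm := wb_seq_mono g hg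
    have hsum := CuSemigroup.sup_add f g hfm hgm y z hflub hglub
    obtain ⟨n, hn⟩ := (wb_le_trans hx₂x hxyz) (fun n => f n + g n)
      (fun a b hab => add_le_add' (hfm hab) (hgm hab)) (y + z) hsum le_rfl
    have hx₂fg : WayBelow x₂ (f (n + 1) + g (n + 1)) :=
      le_wb hn (CuSemigroup.wb_add _ _ _ _ (hf n) (hg n))
    have hfy : WayBelow (f (n + 1)) y := wb_le_trans (hf (n + 1)) (hflub.1 (Set.mem_range_self _))
    have hgz : WayBelow (g (n + 1)) z := wb_le_trans (hg (n + 1)) (hglub.1 (Set.mem_range_self _))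
    obtain ⟨v, -, w, -, hx'vw, hvx₂, hvy, hwx₂, hwz⟩ :=
      hprop Set.univ univ_basis x' x₂ (f (n + 1)) y (g (n + 1)) z
        (Set.mem_univ _) (Set.mem_univ _) (Set.mem_univ _) (Set.mem_univ _)
        (Set.mem_univ _) (Set.mem_univ _) hx₂fg hx'x₂ hfy hgz
    exact ⟨v, w, (wb_le hvx₂).trans (wb_le hx₂x), wb_le hvy,
      (wb_le hwx₂).trans (wb_le hx₂x), wb_le hwz, wb_le hx'vw⟩
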